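/- arXiv:1602.05481 — 3 statements merged into one kernel-verified Lean document; each statement's English description precedes it below -/
import Mathlib

section
/- For all real x, y with x ≥ y > 0, the ratio (2(1+√2)x + y)/√(x² + y²) is at most √(13 + 8√2), with equality when x/y = 2(1+√2). -/
open Real

theorem stmt0 (x y : ℝ) (hxy : x ≥ y) (hy : y > 0) :
    (2 * (1 + Real.sqrt 2) * x + y) / Real.sqrt (x ^ 2 + y ^ 2) ≤
      Real.sqrt (13 + 8 * Real.sqrt 2) ∧
    (x / y = 2 * (1 + Real.sqrt 2) →
      (2 * (1 + Real.sqrt 2) * x + y) / Real.sqrt (x ^ 2 + y ^ 2) =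
        Real.sqrt (13 + 8 * Real.sqrt 2)) := by
  have hx : x > 0 := lt_of_lt_of_le hy hxy
  set a := Real.sqrt 2 with ha
  have hs : a ^ 2 = 2 := Real.sq_sqrt (by norm_num)
  have ha0 : (0:ℝ) ≤ a := Real.sqrt_nonneg 2
  have hd0 : (0:ℝ) < x ^ 2 + y ^ 2 := by positivity
  have hd : (0:ℝ) < Real.sqrt (x ^ 2 + y ^ 2) := Real.sqrt_pos.mpr hd0
  have hc0 : (0:ℝ) ≤ 13 + 8 * a := by positivity
  have hN : (0:ℝ) ≤ 2 * (1 + a) * x + y := by positivity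
  constructor
  · rw [div_le_iff₀ hd]
    have key : (2 * (1 + a) * x + y) ^ 2 ≤ (13 + 8 * a) * (x ^ 2 + y ^ 2) := by
      nlinarith [sq_nonneg (x - 2 * (1 + a) * y), hs]
    have h1 : 2 * (1 + a) * x + y ≤ Real.sqrt ((13 + 8 * a) * (x ^ 2 + y ^ 2)) := by
      calc 2 * (1 + a) * x + y = Real.sqrt ((2 * (1 + a) * x + y) ^ 2) :=
            (Real.sqrt_sq hN).symm
        _ ≤ _ := Real.sqrt_le_sqrt key
    rwa [Real.sqrt_mul hc0] at h1
  · intro h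
    have hxv : x = 2 * (1 + a) * y := by field_simp at h; linarith
    have hnum : 2 * (1 + a) * x + y = (13 + 8 * a) * y := by rw [hxv]; ring_nf; nlinarith [hs]
    have hden : x ^ 2 + y ^ 2 = (13 + 8 * a) * y ^ 2 := by rw [hxv]; ring_nf; nlinarith [hs]
    rw [hnum, hden, Real.sqrt_mul hc0, Real.sqrt_sq hy.le]
    rw [div_eq_iff (by positivity : √(13 + 8 * a) * y ≠ 0)]
    linear_combination (-y) * Real.sq_sqrt hc0
end

section
/- For any points a, b, a' in the Euclidean plane with dist(a, a') ≤ dist(a, b) and the angle ∠a'ab < π/2, we have dist(a', b) < √2 · dist(a, b). -/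
open EuclideanGeometry

theorem stmt2 (a b a' : EuclideanSpace ℝ (Fin 2))
    (hlen : dist a a' ≤ dist a b)
    (hangle : ∠ a' a b < Real.pi / 2) :
    dist a' b < Real.sqrt 2 * dist a b := by
  have ha' : a' ≠ a := by
    rintro rfl
    simp [EuclideanGeometry.angle, vsub_self, InnerProductGeometry.angle_zero_left] at hangle
  have hb : b ≠ a := by
    rintro rfl
    simp [EuclideanGeometry.angle, vsub_self, InnerProductGeometry.angle_zero_right] at hangle
  have hda : 0 < dist a a' := dist_pos.2 (fun h => ha' h.symm)
  have hdb : 0 < dist a b := dist_pos.2 (fun h => hb h.symm)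
  have hcos : 0 < Real.cos (∠ a' a b) :=
    Real.cos_pos_of_mem_Ioo ⟨lt_of_lt_of_le (by linarith [Real.pi_pos]) (EuclideanGeometry.angle_nonneg _ _ _), hangle⟩
  have hlc := EuclideanGeometry.law_cos a' a b
  rw [dist_comm a' a, dist_comm b a] at hlc
  have hsq : dist a' b * dist a' b < (Real.sqrt 2 * dist a b) * (Real.sqrt 2 * dist a b) := by
    have h2 : (Real.sqrt 2 * dist a b) * (Real.sqrt 2 * dist a b) = 2 * (dist a b * dist a b) := by
      rw [show Real.sqrt 2 * dist a b * (Real.sqrt 2 * dist a b)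
        = Real.sqrt 2 * Real.sqrt 2 * (dist a b * dist a b) by ring,
        Real.mul_self_sqrt (by norm_num)]
    rw [h2, hlc]
    nlinarith [mul_pos (mul_pos hda hdb) hcos]
  exact lt_of_mul_self_lt_mul_self₀ (by positivity) hsq
end

section
/- Let S be an axis-aligned square with side length s. If u lies on one side of S and v lies on the opposite side of S, and w is any point on the boundary of S, then d₂(u,w) + d₂(w,v) ≤ (1+√2)·s. -/
/-- Euclidean distance in the plane represented as `ℝ × ℝ`. -/
noncomputable def d2 (u v : ℝ × ℝ) : ℝ :=
  Real.sqrt ((u.1 - v.1) ^ 2 + (u.2 - v.2) ^ 2)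

/-- `p` lies on the boundary of the axis-aligned square `[x₀, x₀+s] × [y₀, y₀+s]`. -/
def OnSquareBoundary (x₀ y₀ s : ℝ) (p : ℝ × ℝ) : Prop :=
  x₀ ≤ p.1 ∧ p.1 ≤ x₀ + s ∧ y₀ ≤ p.2 ∧ p.2 ≤ y₀ + s ∧
    (p.1 = x₀ ∨ p.1 = x₀ + s ∨ p.2 = y₀ ∨ p.2 = y₀ + s)

/-- `u` and `v` lie on two opposite (parallel) sides of the square
`[x₀, x₀+s] × [y₀, y₀+s]`. -/
def OnOppositeSides (x₀ y₀ s : ℝ) (u v : ℝ × ℝ) : Prop :=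
  OnSquareBoundary x₀ y₀ s u ∧ OnSquareBoundary x₀ y₀ s v ∧
    ((u.1 = x₀ ∧ v.1 = x₀ + s) ∨ (u.1 = x₀ + s ∧ v.1 = x₀) ∨
     (u.2 = y₀ ∧ v.2 = y₀ + s) ∨ (u.2 = y₀ + s ∧ v.2 = y₀))

lemma sq_le_of_le_sq' {a b : ℝ} (hb : 0 ≤ b) (ha : 0 ≤ a) (h : a^2 ≤ b^2) : a ≤ b := by
  calc a = Real.sqrt (a^2) := (Real.sqrt_sq ha).symm
    _ ≤ Real.sqrt (b^2) := Real.sqrt_le_sqrt h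
    _ = b := Real.sqrt_sq hb

lemma key_ineq (s t R p q : ℝ) (hs : 0 < s) (ht0 : 0 ≤ t) (hts : t ≤ s)
    (hp : p^2 ≤ t^2 + s^2) (hq : q^2 ≤ (s-t)^2 + s^2)
    (hp0 : 0 ≤ p) (hq0 : 0 ≤ q) (hR : R^2 = 2) (hR0 : 0 ≤ R) :
    p + q ≤ (1 + R) * s := by
  have hts' : 0 ≤ s - t := by linarith
  have hrs : 0 ≤ t*(s-t) + R*s^2 := by positivity
  have hm : p^2 * q^2 ≤ (t^2+s^2)*((s-t)^2+s^2) :=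
    mul_le_mul hp hq (sq_nonneg q) (by positivity)
  have hx : 0 ≤ 2*(R+1)*s^2*(t*(s-t)) := by positivity
  have e : (t*(s-t)+R*s^2)^2 = (t^2+s^2)*((s-t)^2+s^2) + 2*(R+1)*s^2*(t*(s-t)) + (R^2-2)*s^4 := by
    ring
  have h2 : (p*q)^2 ≤ (t*(s-t) + R*s^2)^2 := by
    rw [e, hR]; nlinarith [hm, hx]
  have hpq : p*q ≤ t*(s-t) + R*s^2 := sq_le_of_le_sq' hrs (mul_nonneg hp0 hq0) h2
  have hfin : (p+q)^2 ≤ ((1+R)*s)^2 := by nlinarith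
  exact sq_le_of_le_sq' (by positivity) (by linarith) hfin

lemma diff_sq_le {a b c s : ℝ} (h1 : c ≤ a) (h2 : a ≤ c + s) (h3 : c ≤ b) (h4 : b ≤ c + s) :
    (a - b)^2 ≤ s^2 := by nlinarith

set_option maxHeartbeats 1000000 in
theorem stmt5 (x₀ y₀ s : ℝ) (hs : 0 < s) (u v w : ℝ × ℝ)
    (huv : OnOppositeSides x₀ y₀ s u v)
    (hw : OnSquareBoundary x₀ y₀ s w) :
    d2 u w + d2 w v ≤ (1 + Real.sqrt 2) * s := by
  obtain ⟨hu, hv, hcase⟩ := huv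
  obtain ⟨hux1, hux2, huy1, huy2, -⟩ := hu
  obtain ⟨hvx1, hvx2, hvy1, hvy2, -⟩ := hv
  obtain ⟨hwx1, hwx2, hwy1, hwy2, -⟩ := hw
  have hp2 : (d2 u w)^2 = (u.1-w.1)^2 + (u.2-w.2)^2 := Real.sq_sqrt (by positivity)
  have hq2 : (d2 w v)^2 = (w.1-v.1)^2 + (w.2-v.2)^2 := Real.sq_sqrt (by positivity)
  have hR : (Real.sqrt 2)^2 = 2 := Real.sq_sqrt (by norm_num)
  have hR0 : 0 ≤ Real.sqrt 2 := Real.sqrt_nonneg 2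
  have hp0 : 0 ≤ d2 u w := Real.sqrt_nonneg _
  have hq0 : 0 ≤ d2 w v := Real.sqrt_nonneg _
  rcases hcase with ⟨h1, h2⟩ | ⟨h1, h2⟩ | ⟨h1, h2⟩ | ⟨h1, h2⟩
  · refine key_ineq s (w.1 - x₀) (Real.sqrt 2) (d2 u w) (d2 w v) hs (by linarith) (by linarith) ?_ ?_ hp0 hq0 hR hR0
    · rw [hp2]; have := diff_sq_le huy1 huy2 hwy1 hwy2; nlinarith
    · rw [hq2]; have := diff_sq_le hwy1 hwy2 hvy1 hvy2; nlinarith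
  · refine key_ineq s (x₀ + s - w.1) (Real.sqrt 2) (d2 u w) (d2 w v) hs (by linarith) (by linarith) ?_ ?_ hp0 hq0 hR hR0
    · rw [hp2]; have := diff_sq_le huy1 huy2 hwy1 hwy2; nlinarith
    · rw [hq2]; have := diff_sq_le hwy1 hwy2 hvy1 hvy2; nlinarith
  · refine key_ineq s (w.2 - y₀) (Real.sqrt 2) (d2 u w) (d2 w v) hs (by linarith) (by linarith) ?_ ?_ hp0 hq0 hR hR0
    · rw [hp2]; have := diff_sq_le hux1 hux2 hwx1 hwx2; nlinarith
    · rw [hq2]; have := diff_sq_le hwx1 hwx2 hvx1 hvx2; nlinarith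
  · refine key_ineq s (y₀ + s - w.2) (Real.sqrt 2) (d2 u w) (d2 w v) hs (by linarith) (by linarith) ?_ ?_ hp0 hq0 hR hR0
    · rw [hp2]; have := diff_sq_le hux1 hux2 hwx1 hwx2; nlinarith
    · rw [hq2]; have := diff_sq_le hwx1 hwx2 hvx1 hvx2; nlinarith
end
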